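/- Under the same hypotheses, every proper directed path in D with target node 1 and source node in Tops_A(1,2) contains exactly one edge of E_A(1,2). -/

import Mathlib

open Matrix BigOperators

def SupportedOn {V : Type} (E : V → V → Prop) (Λ : Matrix V V ℝ) : Prop :=
  ∀ u v, ¬ E u v → Λ u v = 0

def Acyclic {V : Type} (E : V → V → Prop) : Prop :=
  ∀ v, ¬ Relation.TransGen E v v

def cycAdj (p : ℕ) (i j : Fin p) : Prop :=
  (i.1 + 1) % p = j.1 ∨ (j.1 + 1) % p = i.1

structure Trek {V : Type} (E : V → V → Prop) (u v : V) where
  left : List V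
  right : List V
  left_ne : left ≠ []
  right_ne : right ≠ []
  top_eq : left.head left_ne = right.head right_ne
  chain_left : List.Chain' E left
  chain_right : List.Chain' E right
  last_left : left.getLast left_ne = u
  last_right : right.getLast right_ne = v

def Trek.top {V : Type} {E : V → V → Prop} {u v : V} (τ : Trek E u v) : V :=
  τ.left.head τ.left_ne

def edgeProd {V : Type} (Λ : Matrix V V ℝ) (l : List V) : ℝ :=
  ((l.zip l.tail).map fun p => Λ p.1 p.2).prod

def Trek.mono {V : Type} {E : V → V → Prop} {u v : V} (Λ Ω : Matrix V V ℝ)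
    (τ : Trek E u v) : ℝ :=
  Ω τ.top τ.top * edgeProd Λ τ.left * edgeProd Λ τ.right

structure TrekSystem {V : Type} (E : V → V → Prop) {n : ℕ} (x y : Fin n → V) where
  perm : Equiv.Perm (Fin n)
  trek : ∀ i, Trek E (x i) (y (perm i))

def TrekSystem.NoSided {V : Type} {E : V → V → Prop} {n : ℕ} {x y : Fin n → V}
    (S : TrekSystem E x y) : Prop :=
  ∀ i j, i ≠ j →
    (∀ a : V, ¬(a ∈ (S.trek i).left ∧ a ∈ (S.trek j).left)) ∧
    (∀ a : V, ¬(a ∈ (S.trek i).right ∧ a ∈ (S.trek j).right))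

structure DWalk {U : Type} (E : U → U → Prop) (u v : U) where
  steps : List (Bool × U × U)
  ne : steps ≠ []
  first_eq : (steps.head ne).2.1 = u
  last_eq : (steps.getLast ne).2.2 = v
  edge : ∀ s ∈ steps, (s.1 = true → E s.2.1 s.2.2) ∧ (s.1 = false → E s.2.2 s.2.1)
  chain : List.Chain' (fun s t : Bool × U × U => s.2.2 = t.2.1) steps

def stepPairOK {U : Type} (A : Set U) (s t : Bool × U × U) : Prop :=
  ((s.1 = true ∧ t.1 = false) → s.2.2 ∈ A) ∧ (¬(s.1 = true ∧ t.1 = false) → s.2.2 ∉ A)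

def DWalk.DConn {U : Type} {E : U → U → Prop} {u v : U} (A : Set U)
    (w : DWalk E u v) : Prop :=
  List.Chain' (stepPairOK A) w.steps

def topOf {U : Type} : List (Bool × U × U) → U → U
  | [], u => u
  | (d, a, _b) :: rest, _ => if d then a else topOf rest _b

def DWalk.top {U : Type} {E : U → U → Prop} {u v : U} (w : DWalk E u v) : U :=
  topOf w.steps u

def TopsA {U : Type} (E : U → U → Prop) (A : Set U) (u v : U) : Set U :=
  {t | ∃ w : DWalk E u v, w.DConn A ∧ w.top = t}

def anAvoid {U : Type} (E : U → U → Prop) (A : Set U) (x : U) : Set U :=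
  {u | u ∉ A ∧ Relation.ReflTransGen (fun a b => E a b ∧ a ∉ A ∧ b ∉ A) u x}

def EA {U : Type} (E : U → U → Prop) (A : Set U) (n1 n2 : U) : Set (U × U) :=
  {e | E e.1 e.2 ∧ e.1 ∈ TopsA E A n1 n2 ∧ e.2 ∈ anAvoid E A n1 ∧ e.2 ∉ TopsA E A n1 n2}

def IsProperPath {U : Type} (E : U → U → Prop) (A : Set U) (l : List U) : Prop :=
  l ≠ [] ∧ List.Chain' (fun a b => E a b ∧ a ∉ A) l

def DigraphCov {U : Type} [Fintype U] [DecidableEq U] (E : U → U → Prop) :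
    Set (Matrix U U ℝ) :=
  {S | ∃ Λ Ω : Matrix U U ℝ, SupportedOn E Λ ∧ Ω.IsDiag ∧ (∀ u, 0 < Ω u u) ∧
        S = ((1 - Λ)⁻¹)ᵀ * Ω * (1 - Λ)⁻¹}

def BSupported {V : Type} (B : SimpleGraph V) (Ω : Matrix V V ℝ) : Prop :=
  ∀ u v, u ≠ v → ¬ B.Adj u v → Ω u v = 0

def MixedCov {V : Type} [Fintype V] [DecidableEq V] (D : V → V → Prop)
    (B : SimpleGraph V) : Set (Matrix V V ℝ) :=
  {S | ∃ Λ Ω : Matrix V V ℝ, SupportedOn D Λ ∧ Ω.PosDef ∧ BSupported B Ω ∧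
        S = ((1 - Λ)⁻¹)ᵀ * Ω * (1 - Λ)⁻¹}

def StrictlyGaussianCausal {V : Type} [Fintype V] [DecidableEq V]
    (D : V → V → Prop) (B : SimpleGraph V) : Prop :=
  ∃ (U : Type) (iF : Fintype U) (iD : DecidableEq U) (ι : V ↪ U) (E : U → U → Prop),
    Acyclic E ∧
      (fun S : Matrix U U ℝ => S.submatrix ι ι) '' (@DigraphCov U iF iD E) = MixedCov D B

def Chordal {V : Type} (B : SimpleGraph V) : Prop :=
  ∀ n : ℕ, 4 ≤ n → ∀ f : ZMod n → V, Function.Injective f →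
    (∀ i, B.Adj (f i) (f (i + 1))) →
    ∃ i j : ZMod n, j ≠ i + 1 ∧ i ≠ j + 1 ∧ i ≠ j ∧ B.Adj (f i) (f j)

def ChainGraph {V : Type} (D : V → V → Prop) (B : SimpleGraph V) : Prop :=
  ¬ ∃ u v, D u v ∧ Relation.ReflTransGen (fun a b => D a b ∨ B.Adj a b) v u



/-!
Membership in `TopsA E A n₁ n₂` is inherited backwards along edges `a → b` of `E` outside `A`:
splicing the detour `b ← a → b` into a d-connecting walk at its top `b` gives one with top `a`.
So along a proper path the nodes of `TopsA` form a prefix, and the edges of `EA` on the path are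
exactly the steps leaving that prefix. The path starts in `TopsA` and ends at `n₁ = cyc 0`, which
is not in `TopsA`: by acyclicity a d-connecting walk from `n₁` with top `n₁` leaves `n₁` by a
forward edge, so prefixing it with a d-connecting walk from `cyc (p - 1)` to `n₁` would d-connect
`cyc (p - 1)` with `n₂ = cyc 1`, which are not adjacent in the cycle. Hence exactly one step of the
path lies in `EA`.
-/

namespace List

theorem countP_zip_tail_eq_ite {α : Type*} {R : α → α → Prop} (P : α → Prop) [DecidablePred P]
    (Q : α × α → Bool) (hQ : ∀ a b, R a b → (Q (a, b) ↔ P a ∧ ¬P b))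
    (hP : ∀ a b, R a b → P b → P a) :
    ∀ {l : List α}, l.IsChain R → ∀ hne : l ≠ [], ¬P (l.getLast hne) →
      (l.zip l.tail).countP Q = if P (l.head hne) then 1 else 0
  | [_], _, _, hlast => by simp_all
  | a :: b :: l, hl, _, hlast => by
    obtain ⟨hab, hl⟩ := isChain_cons_cons.mp hl
    have ih : ((b :: l).zip l).countP Q = if P b then 1 else 0 :=
      countP_zip_tail_eq_ite P Q hQ hP hl (cons_ne_nil b l) hlast
    rw [tail_cons, zip_cons_cons, countP_cons, ih]
    by_cases hb : P b
    · simp [hb, hP a b hab hb, hQ a b hab]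
    · by_cases ha : P a <;> simp [ha, hb, hQ a b hab]

end List

namespace DWalk

variable {U : Type} {E : U → U → Prop}

def fwd {x y : U} (h : E x y) : DWalk E x y where
  steps := [(true, x, y)]
  ne := List.cons_ne_nil _ _
  first_eq := rfl
  last_eq := rfl
  edge := by simp [h]
  chain := List.isChain_singleton _

def bwd {x y : U} (h : E y x) : DWalk E x y where
  steps := [(false, x, y)]
  ne := List.cons_ne_nil _ _
  first_eq := rfl
  last_eq := rfl
  edge := by simp [h]
  chain := List.isChain_singleton _

def append {u m v : U} (w₁ : DWalk E u m) (w₂ : DWalk E m v) : DWalk E u v where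
  steps := w₁.steps ++ w₂.steps
  ne := by simp [w₁.ne]
  first_eq := by rw [List.head_append_of_ne_nil w₁.ne]; exact w₁.first_eq
  last_eq := by rw [List.getLast_append_of_ne_nil _ w₂.ne]; exact w₂.last_eq
  edge s hs := (List.mem_append.mp hs).elim (w₁.edge s) (w₂.edge s)
  chain := List.isChain_append.mpr ⟨w₁.chain, w₂.chain, by
    simp only [List.getLast?_eq_some_getLast w₁.ne, List.head?_eq_some_head w₂.ne,
      Option.mem_def, Option.some.injEq, forall_eq']
    rw [w₁.last_eq, w₂.first_eq]⟩

@[simp] theorem steps_fwd {x y : U} (h : E x y) : (fwd h).steps = [(true, x, y)] := rfl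

@[simp] theorem steps_bwd {x y : U} (h : E y x) : (bwd h).steps = [(false, x, y)] := rfl

@[simp] theorem steps_append {u m v : U} (w₁ : DWalk E u m) (w₂ : DWalk E m v) :
    (w₁.append w₂).steps = w₁.steps ++ w₂.steps := rfl

@[simp] theorem top_fwd {x y : U} (h : E x y) : (fwd h).top = x := rfl

@[simp] theorem top_bwd {x y : U} (h : E y x) : (bwd h).top = y := rfl

@[simp] theorem top_fwd_append {x y v : U} (h : E x y) (w : DWalk E y v) :
    ((fwd h).append w).top = x := rfl

@[simp] theorem top_bwd_append {x y v : U} (h : E y x) (w : DWalk E y v) :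
    ((bwd h).append w).top = w.top := rfl

theorem dConn_append {A : Set U} {u m v : U} {w₁ : DWalk E u m} {w₂ : DWalk E m v} :
    (w₁.append w₂).DConn A ↔
      w₁.DConn A ∧ w₂.DConn A ∧ stepPairOK A (w₁.steps.getLast w₁.ne) (w₂.steps.head w₂.ne) := by
  simp [DConn, List.Chain', append, List.isChain_append, List.getLast?_eq_some_getLast w₁.ne,
    List.head?_eq_some_head w₂.ne]

@[simp] theorem dConn_fwd {A : Set U} {x y : U} (h : E x y) : (fwd h).DConn A :=
  List.isChain_singleton _

@[simp] theorem dConn_bwd {A : Set U} {x y : U} (h : E y x) : (bwd h).DConn A :=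
  List.isChain_singleton _

@[elab_as_elim]
theorem induction {v : U} {motive : ∀ {u : U}, DWalk E u v → Prop}
    (fwd_single : ∀ {x : U} (h : E x v), motive (fwd h))
    (bwd_single : ∀ {x : U} (h : E v x), motive (bwd h))
    (fwd_cons : ∀ {x y : U} (h : E x y) (w : DWalk E y v), motive w → motive ((fwd h).append w))
    (bwd_cons : ∀ {x y : U} (h : E y x) (w : DWalk E y v), motive w → motive ((bwd h).append w))
    {u : U} (w : DWalk E u v) : motive w := by
  obtain ⟨steps, ne, first_eq, last_eq, edge, chain⟩ := w
  induction steps generalizing u with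
  | nil => exact absurd rfl ne
  | cons s rest ih =>
    obtain ⟨d, x, y⟩ := s
    obtain rfl : x = u := first_eq
    have hxy := edge _ List.mem_cons_self
    cases rest with
    | nil =>
      obtain rfl : y = v := last_eq
      cases d
      · exact bwd_single (hxy.2 rfl)
      · exact fwd_single (hxy.1 rfl)
    | cons t rest =>
      obtain ⟨rfl : y = t.2.1, hrest⟩ := List.isChain_cons_cons.mp chain
      have ih := ih (List.cons_ne_nil _ _) rfl last_eq
        (fun s hs => edge s (List.mem_cons_of_mem _ hs)) hrest
      cases d
      · exact bwd_cons (hxy.2 rfl) _ ih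
      · exact fwd_cons (hxy.1 rfl) _ ih

end DWalk

theorem cycAdj_of_val_eq_pred {p : ℕ} {i j : Fin p} (hi : i.1 = p - 1) (hj : j.1 = 0) :
    cycAdj p i j := by
  left
  rw [hi, hj, Nat.sub_add_cancel (by omega), Nat.mod_self]

theorem not_cycAdj_of_val_eq_pred {p : ℕ} (hp : 4 ≤ p) {i j : Fin p} (hi : i.1 = p - 1)
    (hj : j.1 = 1) : ¬cycAdj p i j := by
  rw [cycAdj, hi, hj, Nat.sub_add_cancel (by omega), Nat.mod_self, Nat.mod_eq_of_lt (by omega)]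
  omega

section Tops

variable {U : Type} {E : U → U → Prop} {A : Set U}

theorem DWalk.reflTransGen_top {u v : U} (w : DWalk E u v) : Relation.ReflTransGen E w.top u := by
  induction w using DWalk.induction with
  | fwd_single h => exact .refl
  | bwd_single h => exact .single h
  | fwd_cons h w _ => exact .refl
  | bwd_cons h w ih => exact ih.tail h

theorem DWalk.head_fst_of_top_eq (hE : Acyclic E) {u v : U} (w : DWalk E u v) (htop : w.top = u) :
    (w.steps.head w.ne).1 = true := by
  induction w using DWalk.induction with
  | fwd_single h => rfl
  | bwd_single h => exact absurd (.single (htop ▸ h)) (hE _)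
  | fwd_cons h w _ => rfl
  | bwd_cons h w _ => exact absurd (Relation.TransGen.tail' (htop ▸ w.reflTransGen_top) h) (hE _)

theorem not_mem_topsA_self (hE : Acyclic E) {z u v : U} (hu : u ∉ A)
    (hzu : ∃ w : DWalk E z u, w.DConn A) (hzv : ¬∃ w : DWalk E z v, w.DConn A) :
    u ∉ TopsA E A u v := by
  rintro ⟨w, hw, htop⟩
  obtain ⟨w₀, hw₀⟩ := hzu
  refine hzv ⟨w₀.append w, DWalk.dConn_append.mpr ⟨hw₀, hw, ?_⟩⟩
  simp [stepPairOK, w.head_fst_of_top_eq hE htop, w₀.last_eq, hu]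

theorem mem_topsA_of_edge_of_head_fwd {a b v : U} (hab : E a b) (ha : a ∉ A) (hb : b ∉ A)
    (w : DWalk E b v) (hw : w.DConn A) (hfwd : (w.steps.head w.ne).1 = true) :
    a ∈ TopsA E A b v :=
  ⟨(DWalk.bwd hab).append ((DWalk.fwd hab).append w), by
    simp [DWalk.dConn_append, stepPairOK, hw, hfwd, ha, hb],
    rfl⟩

theorem mem_topsA_of_edge {a b u v : U} (hab : E a b) (ha : a ∉ A) (hb : b ∉ A)
    (hbT : b ∈ TopsA E A u v) : a ∈ TopsA E A u v := by
  obtain ⟨w, hw, htop⟩ := hbT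
  induction w using DWalk.induction with
  | fwd_single h =>
    subst htop
    exact mem_topsA_of_edge_of_head_fwd hab ha hb _ hw rfl
  | fwd_cons h w _ =>
    subst htop
    exact mem_topsA_of_edge_of_head_fwd hab ha hb _ hw rfl
  | bwd_single h =>
    rw [DWalk.top_bwd] at htop
    subst htop
    refine ⟨(DWalk.bwd h).append ((DWalk.bwd hab).append (DWalk.fwd hab)), ?_, rfl⟩
    simp [DWalk.dConn_append, stepPairOK, ha, hb]
  | bwd_cons h w ih =>
    obtain ⟨-, hw, hy⟩ := DWalk.dConn_append.mp hw
    obtain ⟨w', hw', htop'⟩ := ih hw htop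
    refine ⟨(DWalk.bwd h).append w', DWalk.dConn_append.mpr ⟨DWalk.dConn_bwd h, hw', ?_⟩, htop'⟩
    simpa [stepPairOK] using hy

theorem IsProperPath.forall_mem_anAvoid {l : List U} (hl : IsProperPath E A l) {x : U} (hx : x ∉ A)
    (hne : l ≠ []) (htgt : l.getLast hne = x) : ∀ y ∈ l, y ∈ anAvoid E A x :=
  hl.2.backwards_induction _ l
    (fun _ _ hyz hz => ⟨hyz.2, .head ⟨hyz.1, hyz.2, hz.1⟩ hz.2⟩)
    (fun _ => by rw [htgt]; exact ⟨hx, .refl⟩)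

open scoped Classical in
theorem countP_zip_tail_mem_EA_eq_one (hE : Acyclic E) {z n₁ n₂ : U} (hn₁ : n₁ ∉ A)
    (hzn₁ : ∃ w : DWalk E z n₁, w.DConn A) (hzn₂ : ¬∃ w : DWalk E z n₂, w.DConn A)
    {l : List U} (hne : l ≠ []) (hl : IsProperPath E A l) (hsrc : l.head hne ∈ TopsA E A n₁ n₂)
    (htgt : l.getLast hne = n₁) :
    ((l.zip l.tail).countP fun e => decide (e ∈ EA E A n₁ n₂)) = 1 := by
  have hn₁T : n₁ ∉ TopsA E A n₁ n₂ := not_mem_topsA_self hE hn₁ hzn₁ hzn₂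
  have havoid := hl.forall_mem_anAvoid hn₁ hne htgt
  have hchain : l.IsChain fun a b => E a b ∧ a ∉ A ∧ b ∈ anAvoid E A n₁ :=
    (List.IsChain.iff_mem.mp hl.2).imp fun a b ⟨_, hb, hab⟩ => ⟨hab.1, hab.2, havoid b hb⟩
  rw [List.countP_zip_tail_eq_ite (· ∈ TopsA E A n₁ n₂) _
    (fun a b hab => by simp [EA, hab.1, hab.2.2])
    (fun a b hab => mem_topsA_of_edge hab.1 hab.2.1 hab.2.2.1) hchain hne (htgt ▸ hn₁T)]
  simp [hsrc]

end Tops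

open scoped Classical in
theorem stmt14 {U : Type} (E : U → U → Prop) (hE : Acyclic E) (A : Set U)
    {p : ℕ} (hp : 4 ≤ p) (cyc : Fin p ↪ U) (hA : ∀ i, cyc i ∉ A)
    (hdc : ∀ i j : Fin p, i ≠ j →
      ((∃ w : DWalk E (cyc i) (cyc j), w.DConn A) ↔ cycAdj p i j))
    (l : List U) (hne : l ≠ []) (hl : IsProperPath E A l)
    (hsrc : l.head hne ∈ TopsA E A (cyc ⟨0, by omega⟩) (cyc ⟨1, by omega⟩))
    (htgt : l.getLast hne = (cyc ⟨0, by omega⟩)) :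
    ((l.zip l.tail).countP fun e => decide (e ∈ EA E A (cyc ⟨0, by omega⟩) (cyc ⟨1, by omega⟩))) = 1 := by
  have hlast_ne_zero : (⟨p - 1, by omega⟩ : Fin p) ≠ ⟨0, by omega⟩ :=
    Fin.ne_of_val_ne (show p - 1 ≠ 0 by omega)
  have hlast_ne_one : (⟨p - 1, by omega⟩ : Fin p) ≠ ⟨1, by omega⟩ :=
    Fin.ne_of_val_ne (show p - 1 ≠ 1 by omega)
  exact countP_zip_tail_mem_EA_eq_one hE (hA _)
    ((hdc _ _ hlast_ne_zero).mpr (cycAdj_of_val_eq_pred rfl rfl))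
    (fun h => not_cycAdj_of_val_eq_pred hp rfl rfl ((hdc _ _ hlast_ne_one).mp h)) hne hl hsrc htgt
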